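/- arXiv:math/0505449 — 3 statements merged into one kernel-verified Lean document; each statement's English description precedes it below -/
import Mathlib

section
/- For all real α, γ > 0 with α + γ > d, and α ≠ d, γ ≠ d, there exists a constant C = C(α, γ, d) < ∞ such that for all nonzero k ∈ ℤ^d, the sum over all pairs (l, m) of nonzero elements of ℤ^d with l + m = k of 1/(|m|^α |l|^γ) is at most C (1 + |k|)^{-β}, where β = min{α, γ, α + γ − d}. -/
open Real

/-- Euclidean norm of a lattice point in `ℤ^d`. -/
noncomputable def latticeNorm {d : ℕ} (k : Fin d → ℤ) : ℝ :=
  Real.sqrt (∑ i, ((k i : ℝ)) ^ 2)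

/-!
Since `|l| + |k - l| ≥ |k|`, one of `l`, `k - l` has norm at least `|k|/2`. Where `|l| ≤ |k|/2`
the summand is at most `(|k|/2)^(-α) |l|^(-γ)`, and summing `|l|^(-γ)` over the ball of radius
`|k|/2` gives `O(|k|^(d-γ))` if `γ < d` and `O(1)` if `γ > d`; the region `|k - l| ≤ |k|/2` is
symmetric. Where both norms exceed `|k|/2` the summand is at most `|l|^(-α-γ) + |k-l|^(-α-γ)`,
whose sum over the exterior of that ball is `O(|k|^(d-α-γ))`. Both lattice-sum estimates come
from a dyadic decomposition: the shell `2^j ≤ |l| < 2^(j+1)` holds at most `6^d 2^(jd)` points,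
so the sums are dominated by geometric series with ratio `2^(d-θ)`.
-/

open Finset

variable {d : ℕ}

lemma latticeNorm_eq_norm (k : Fin d → ℤ) :
    latticeNorm k = ‖WithLp.toLp 2 (fun i => (k i : ℝ))‖ := by
  simp [latticeNorm, EuclideanSpace.norm_eq]

lemma latticeNorm_nonneg (k : Fin d → ℤ) : 0 ≤ latticeNorm k := Real.sqrt_nonneg _

lemma latticeNorm_zero : latticeNorm (0 : Fin d → ℤ) = 0 := by simp [latticeNorm]

lemma latticeNorm_le_add_sub (k l : Fin d → ℤ) :
    latticeNorm k ≤ latticeNorm l + latticeNorm (k - l) := by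
  simp only [latticeNorm_eq_norm, Pi.sub_apply, Int.cast_sub]
  exact norm_le_norm_add_norm_sub' _ _

lemma abs_le_latticeNorm (k : Fin d → ℤ) (i : Fin d) : |(k i : ℝ)| ≤ latticeNorm k := by
  simpa [latticeNorm_eq_norm] using PiLp.norm_apply_le (WithLp.toLp 2 (fun i => (k i : ℝ))) i

lemma one_le_latticeNorm {k : Fin d → ℤ} (hk : k ≠ 0) : 1 ≤ latticeNorm k := by
  obtain ⟨i, hi⟩ := Function.ne_iff.1 hk
  calc (1 : ℝ) ≤ |(k i : ℝ)| := by exact_mod_cast Int.one_le_abs hi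
    _ ≤ latticeNorm k := abs_le_latticeNorm k i

lemma card_le_of_forall_latticeNorm_le {T : ℝ} (hT : 1 ≤ T) (s : Finset (Fin d → ℤ))
    (hs : ∀ l ∈ s, latticeNorm l ≤ T) : (#s : ℝ) ≤ (3 * T) ^ d := by
  set N : ℕ := ⌊T⌋₊
  have hbox : s ⊆ Fintype.piFinset fun _ => Icc (-(N : ℤ)) N := by
    intro l hl
    refine Fintype.mem_piFinset.2 fun i => mem_Icc.2 (abs_le.1 ?_)
    have : ((l i).natAbs : ℝ) ≤ T := by
      simpa [Nat.cast_natAbs] using (abs_le_latticeNorm l i).trans (hs l hl)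
    rw [Int.abs_eq_natAbs]
    exact_mod_cast Nat.le_floor this
  have hN : (N : ℝ) ≤ T := Nat.floor_le (by linarith)
  calc (#s : ℝ) ≤ #(Fintype.piFinset fun _ : Fin d => Icc (-(N : ℤ)) N) := by
        exact_mod_cast card_le_card hbox
    _ = (2 * N + 1) ^ d := by
        rw [Fintype.card_piFinset, prod_const, Int.card_Icc, card_univ, Fintype.card_fin]
        rw [show ((N : ℤ) + 1 - -(N : ℤ)).toNat = 2 * N + 1 by omega]
        push_cast; ring
    _ ≤ (3 * T) ^ d := by gcongr; linarith

noncomputable def dyadicIndex (x : ℝ) : ℕ := Nat.log 2 ⌊x⌋₊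

lemma dyadicIndex_mono : Monotone dyadicIndex :=
  fun _ _ h => Nat.log_mono_right (Nat.floor_mono h)

lemma two_pow_dyadicIndex_le {x : ℝ} (hx : 1 ≤ x) : (2 : ℝ) ^ dyadicIndex x ≤ x := by
  have : 2 ^ dyadicIndex x ≤ ⌊x⌋₊ := Nat.pow_log_le_self 2 (Nat.floor_pos.2 hx).ne'
  calc (2 : ℝ) ^ dyadicIndex x ≤ ⌊x⌋₊ := by exact_mod_cast this
    _ ≤ x := Nat.floor_le (by linarith)

lemma lt_two_pow_dyadicIndex_succ (x : ℝ) : x < 2 ^ (dyadicIndex x + 1) := by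
  have : ⌊x⌋₊ + 1 ≤ 2 ^ (dyadicIndex x + 1) := Nat.lt_pow_succ_log_self one_lt_two _
  calc x < ⌊x⌋₊ + 1 := Nat.lt_floor_add_one x
    _ ≤ 2 ^ (dyadicIndex x + 1) := by exact_mod_cast this

lemma sum_pow_le_of_forall_le {r : ℝ} (hr : 1 < r) {T : Finset ℕ} {J : ℕ}
    (hT : ∀ j ∈ T, j ≤ J) : ∑ j ∈ T, r ^ j ≤ r ^ (J + 1) / (r - 1) := by
  have hr1 : 0 < r - 1 := by linarith
  calc ∑ j ∈ T, r ^ j ≤ ∑ j ∈ range (J + 1), r ^ j :=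
        sum_le_sum_of_subset_of_nonneg (fun j hj => mem_range_succ_iff.2 (hT j hj))
          fun _ _ _ => by positivity
    _ = (r ^ (J + 1) - 1) / (r - 1) := geom_sum_eq hr.ne' _
    _ ≤ r ^ (J + 1) / (r - 1) := by gcongr; linarith

lemma sum_pow_le_of_forall_ge {r : ℝ} (hr0 : 0 ≤ r) (hr : r < 1) {T : Finset ℕ} {J : ℕ}
    (hT : ∀ j ∈ T, J ≤ j) : ∑ j ∈ T, r ^ j ≤ r ^ J / (1 - r) := by
  set M := max J (T.sup id)
  have hr1 : 0 < 1 - r := by linarith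
  calc ∑ j ∈ T, r ^ j ≤ ∑ j ∈ Ico J (M + 1), r ^ j :=
        sum_le_sum_of_subset_of_nonneg
          (fun j hj => mem_Ico.2 ⟨hT j hj, Nat.lt_succ_of_le ((le_sup (f := id) hj).trans
            (le_max_right _ _))⟩)
          fun _ _ _ => by positivity
    _ = (r ^ J - r ^ (M + 1)) / (1 - r) := geom_sum_Ico' hr.ne (by omega)
    _ ≤ r ^ J / (1 - r) := by gcongr; linarith [pow_nonneg hr0 (M + 1)]

lemma sum_rpow_neg_le_of_dyadicIndex_eq {p : ℝ} (hp : 0 ≤ p) (j : ℕ) (s : Finset (Fin d → ℤ))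
    (hs : ∀ l ∈ s, l ≠ 0 ∧ dyadicIndex (latticeNorm l) = j) :
    ∑ l ∈ s, latticeNorm l ^ (-p) ≤ 6 ^ d * (2 ^ ((d : ℝ) - p)) ^ j := by
  have hlow : ∀ l ∈ s, (2 : ℝ) ^ j ≤ latticeNorm l := fun l hl =>
    (hs l hl).2 ▸ two_pow_dyadicIndex_le (one_le_latticeNorm (hs l hl).1)
  have hup : ∀ l ∈ s, latticeNorm l ≤ 2 * 2 ^ j := fun l hl => by
    have := lt_two_pow_dyadicIndex_succ (latticeNorm l)
    rw [(hs l hl).2, pow_succ'] at this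
    exact this.le
  calc ∑ l ∈ s, latticeNorm l ^ (-p) ≤ ∑ l ∈ s, ((2 : ℝ) ^ j) ^ (-p) :=
        sum_le_sum fun l hl => rpow_le_rpow_of_nonpos (by positivity) (hlow l hl) (by linarith)
    _ = #s * ((2 : ℝ) ^ j) ^ (-p) := by rw [sum_const, nsmul_eq_mul]
    _ ≤ (3 * (2 * 2 ^ j)) ^ d * ((2 : ℝ) ^ j) ^ (-p) := by
        have : (1 : ℝ) ≤ 2 ^ j := one_le_pow₀ one_le_two
        gcongr
        exact card_le_of_forall_latticeNorm_le (by linarith) s hup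
    _ = 6 ^ d * (2 ^ ((d : ℝ) - p)) ^ j := by
        rw [rpow_pow_comm zero_le_two, rpow_sub (by positivity), rpow_natCast,
          rpow_neg (by positivity)]
        ring

lemma sum_rpow_neg_le_dyadic {p : ℝ} (hp : 0 ≤ p) (s : Finset (Fin d → ℤ))
    (hs : ∀ l ∈ s, l ≠ 0) :
    ∑ l ∈ s, latticeNorm l ^ (-p) ≤
      6 ^ d * ∑ j ∈ s.image (dyadicIndex ∘ latticeNorm), (2 ^ ((d : ℝ) - p)) ^ j := by
  rw [← sum_fiberwise_of_maps_to (t := s.image (dyadicIndex ∘ latticeNorm))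
    fun l hl => mem_image_of_mem _ hl, mul_sum]
  refine sum_le_sum fun j _ => sum_rpow_neg_le_of_dyadicIndex_eq hp j _ fun l hl => ?_
  rw [mem_filter] at hl
  exact ⟨hs l hl.1, hl.2⟩

lemma sum_rpow_neg_le_of_latticeNorm_le {θ : ℝ} (hθ : 0 ≤ θ) (hθd : θ < d) {R : ℝ} (hR : 0 ≤ R)
    (s : Finset (Fin d → ℤ)) (hs : ∀ l ∈ s, l ≠ 0 ∧ latticeNorm l ≤ R) :
    ∑ l ∈ s, latticeNorm l ^ (-θ) ≤
      6 ^ d * 2 ^ (d : ℝ) / (2 ^ ((d : ℝ) - θ) - 1) * R ^ ((d : ℝ) - θ) := by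
  set r : ℝ := 2 ^ ((d : ℝ) - θ)
  have hr : 1 < r := one_lt_rpow one_lt_two (by linarith)
  rcases s.eq_empty_or_nonempty with rfl | ⟨l₀, hl₀⟩
  · rw [sum_empty]
    exact mul_nonneg (div_nonneg (by positivity) (by linarith)) (rpow_nonneg hR _)
  have hR1 : 1 ≤ R := (one_le_latticeNorm (hs l₀ hl₀).1).trans (hs l₀ hl₀).2
  set J := dyadicIndex R
  have hJ : ∀ j ∈ s.image (dyadicIndex ∘ latticeNorm), j ≤ J := by
    simp only [mem_image, Function.comp_apply]
    rintro _ ⟨l, hl, rfl⟩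
    exact dyadicIndex_mono (hs l hl).2
  have hrJ : r ^ (J + 1) ≤ 2 ^ (d : ℝ) * R ^ ((d : ℝ) - θ) :=
    calc r ^ (J + 1) = (2 * 2 ^ J) ^ ((d : ℝ) - θ) := by rw [rpow_pow_comm zero_le_two, pow_succ']
      _ ≤ (2 * R) ^ ((d : ℝ) - θ) := by gcongr; exact two_pow_dyadicIndex_le hR1
      _ = 2 ^ ((d : ℝ) - θ) * R ^ ((d : ℝ) - θ) := mul_rpow zero_le_two hR
      _ ≤ 2 ^ (d : ℝ) * R ^ ((d : ℝ) - θ) := by gcongr <;> linarith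
  calc ∑ l ∈ s, latticeNorm l ^ (-θ)
      ≤ 6 ^ d * ∑ j ∈ s.image (dyadicIndex ∘ latticeNorm), r ^ j :=
        sum_rpow_neg_le_dyadic hθ s fun l hl => (hs l hl).1
    _ ≤ 6 ^ d * (r ^ (J + 1) / (r - 1)) := by gcongr; exact sum_pow_le_of_forall_le hr hJ
    _ ≤ 6 ^ d * (2 ^ (d : ℝ) * R ^ ((d : ℝ) - θ) / (r - 1)) := by gcongr
    _ = _ := by ring

lemma sum_rpow_neg_le_of_lt_latticeNorm {p : ℝ} (hp : (d : ℝ) < p) {R : ℝ} (hR : 0 < R)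
    (s : Finset (Fin d → ℤ)) (hs : ∀ l ∈ s, R < latticeNorm l) :
    ∑ l ∈ s, latticeNorm l ^ (-p) ≤
      6 ^ d * 2 ^ p / (1 - 2 ^ ((d : ℝ) - p)) * R ^ ((d : ℝ) - p) := by
  have hp0 : 0 ≤ p := (Nat.cast_nonneg d).trans hp.le
  set r : ℝ := 2 ^ ((d : ℝ) - p)
  have hr : r < 1 := rpow_lt_one_of_one_lt_of_neg one_lt_two (by linarith)
  set J := dyadicIndex R
  have hJ : ∀ j ∈ s.image (dyadicIndex ∘ latticeNorm), J ≤ j := by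
    simp only [mem_image, Function.comp_apply]
    rintro _ ⟨l, hl, rfl⟩
    exact dyadicIndex_mono (hs l hl).le
  have hRJ : R / 2 ≤ 2 ^ J := by
    have := lt_two_pow_dyadicIndex_succ R
    rw [pow_succ'] at this
    linarith
  have hrJ : r ^ J ≤ 2 ^ p * R ^ ((d : ℝ) - p) :=
    calc r ^ J = (2 ^ J) ^ ((d : ℝ) - p) := rpow_pow_comm zero_le_two _ _
      _ ≤ (R / 2) ^ ((d : ℝ) - p) := rpow_le_rpow_of_nonpos (by positivity) hRJ (by linarith)
      _ = 2 ^ (p - d) * R ^ ((d : ℝ) - p) := by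
          rw [div_rpow hR.le zero_le_two, div_eq_mul_inv, ← rpow_neg zero_le_two, neg_sub,
            mul_comm]
      _ ≤ 2 ^ p * R ^ ((d : ℝ) - p) := by gcongr <;> linarith
  have hs0 : ∀ l ∈ s, l ≠ 0 := by
    rintro l hl rfl
    linarith [hs 0 hl, latticeNorm_zero (d := d)]
  calc ∑ l ∈ s, latticeNorm l ^ (-p)
      ≤ 6 ^ d * ∑ j ∈ s.image (dyadicIndex ∘ latticeNorm), r ^ j :=
        sum_rpow_neg_le_dyadic hp0 s hs0
    _ ≤ 6 ^ d * (r ^ J / (1 - r)) := by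
        gcongr; exact sum_pow_le_of_forall_ge (by positivity) hr hJ
    _ ≤ 6 ^ d * (2 ^ p * R ^ ((d : ℝ) - p) / (1 - r)) := by gcongr
    _ = _ := by ring

noncomputable def innerTerm (θ R : ℝ) (l : Fin d → ℤ) : ℝ :=
  if l ≠ 0 ∧ latticeNorm l ≤ R then latticeNorm l ^ (-θ) else 0

noncomputable def outerTerm (θ R : ℝ) (l : Fin d → ℤ) : ℝ :=
  if R < latticeNorm l then latticeNorm l ^ (-θ) else 0

lemma innerTerm_nonneg (θ R : ℝ) (l : Fin d → ℤ) : 0 ≤ innerTerm θ R l :=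
  ite_nonneg (rpow_nonneg (latticeNorm_nonneg l) _) le_rfl

lemma outerTerm_nonneg (θ R : ℝ) (l : Fin d → ℤ) : 0 ≤ outerTerm θ R l :=
  ite_nonneg (rpow_nonneg (latticeNorm_nonneg l) _) le_rfl

lemma exists_sum_outerTerm_le {p : ℝ} (hp : (d : ℝ) < p) :
    ∃ E : ℝ, 0 ≤ E ∧ ∀ R : ℝ, 0 < R → ∀ s : Finset (Fin d → ℤ),
      ∑ l ∈ s, outerTerm p R l ≤ E * R ^ ((d : ℝ) - p) := by
  have hr : (2 : ℝ) ^ ((d : ℝ) - p) < 1 := rpow_lt_one_of_one_lt_of_neg one_lt_two (by linarith)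
  refine ⟨6 ^ d * 2 ^ p / (1 - 2 ^ ((d : ℝ) - p)), div_nonneg (by positivity) (by linarith),
    fun R hR s => ?_⟩
  simp only [outerTerm, ← sum_filter]
  exact sum_rpow_neg_le_of_lt_latticeNorm hp hR _ fun l hl => (mem_filter.1 hl).2

lemma exists_sum_innerTerm_le {θ : ℝ} (hθ : 0 < θ) (hθd : θ ≠ d) :
    ∃ E : ℝ, 0 ≤ E ∧ ∀ R : ℝ, 0 < R → ∀ s : Finset (Fin d → ℤ),
      ∑ l ∈ s, innerTerm θ R l ≤ E * R ^ max ((d : ℝ) - θ) 0 := by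
  rcases hθd.lt_or_gt with hlt | hgt
  · have hr : 1 < (2 : ℝ) ^ ((d : ℝ) - θ) := one_lt_rpow one_lt_two (by linarith)
    refine ⟨6 ^ d * 2 ^ (d : ℝ) / (2 ^ ((d : ℝ) - θ) - 1), div_nonneg (by positivity) (by linarith),
      fun R hR s => ?_⟩
    simp only [max_eq_left (sub_nonneg.2 hlt.le), innerTerm, ← sum_filter]
    exact sum_rpow_neg_le_of_latticeNorm_le hθ.le hlt hR.le _ fun l hl => (mem_filter.1 hl).2
  · -- for `θ > d` the whole series converges: every nonzero point lies outside radius `1/2`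
    obtain ⟨E, hE, hsum⟩ := exists_sum_outerTerm_le (d := d) hgt
    refine ⟨E * (1 / 2) ^ ((d : ℝ) - θ), by positivity, fun R _ s => ?_⟩
    rw [max_eq_right (by linarith), rpow_zero, mul_one]
    refine (sum_le_sum fun l _ => ?_).trans (hsum (1 / 2) one_half_pos s)
    unfold innerTerm outerTerm
    split_ifs with hl hl'
    · exact le_rfl
    · exact absurd (one_half_lt_one.trans_le (one_le_latticeNorm hl.1)) hl'
    · exact rpow_nonneg (latticeNorm_nonneg l) _
    · exact le_rfl

lemma rpow_neg_mul_rpow_neg_le {a b α γ : ℝ} (ha : 0 < a) (hb : 0 < b) (hα : 0 ≤ α)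
    (hγ : 0 ≤ γ) : a ^ (-α) * b ^ (-γ) ≤ a ^ (-(α + γ)) + b ^ (-(α + γ)) := by
  rw [neg_add, rpow_add ha, rpow_add hb]
  rcases le_total a b with hab | hab
  · have : b ^ (-γ) ≤ a ^ (-γ) := rpow_le_rpow_of_nonpos ha hab (by linarith)
    nlinarith [rpow_pos_of_pos ha (-α), rpow_pos_of_pos hb (-α), rpow_pos_of_pos hb (-γ)]
  · have : a ^ (-α) ≤ b ^ (-α) := rpow_le_rpow_of_nonpos hb hab (by linarith)
    nlinarith [rpow_pos_of_pos ha (-α), rpow_pos_of_pos ha (-γ), rpow_pos_of_pos hb (-γ)]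

noncomputable def pairSummand (α γ : ℝ) (k l : Fin d → ℤ) : ℝ :=
  if l ≠ 0 ∧ k - l ≠ 0 then 1 / (latticeNorm (k - l) ^ α * latticeNorm l ^ γ) else 0

lemma pairSummand_le {α γ R : ℝ} (hα : 0 ≤ α) (hγ : 0 ≤ γ) (hR : 0 < R) {k : Fin d → ℤ}
    (hk : 2 * R ≤ latticeNorm k) (l : Fin d → ℤ) :
    pairSummand α γ k l ≤
      R ^ (-α) * innerTerm γ R l + R ^ (-γ) * innerTerm α R (k - l) +
        (outerTerm (α + γ) R l + outerTerm (α + γ) R (k - l)) := by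
  have hRα := rpow_pos_of_pos hR (-α)
  have hRγ := rpow_pos_of_pos hR (-γ)
  have h₁ := innerTerm_nonneg γ R l
  have h₂ := innerTerm_nonneg α R (k - l)
  have h₃ := outerTerm_nonneg (α + γ) R l
  have h₄ := outerTerm_nonneg (α + γ) R (k - l)
  unfold pairSummand
  split_ifs with hne
  swap
  · positivity
  obtain ⟨hl, hkl⟩ := hne
  set a := latticeNorm (k - l)
  set b := latticeNorm l
  have ha : 0 < a := (one_le_latticeNorm hkl).trans_lt' one_pos
  have hb : 0 < b := (one_le_latticeNorm hl).trans_lt' one_pos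
  have hab : 2 * R ≤ a + b := hk.trans ((latticeNorm_le_add_sub k l).trans_eq (add_comm _ _))
  rw [one_div, mul_inv, ← rpow_neg ha.le, ← rpow_neg hb.le]
  by_cases hbR : b ≤ R
  · have haα : a ^ (-α) ≤ R ^ (-α) := rpow_le_rpow_of_nonpos hR (by linarith) (by linarith)
    have hinner : innerTerm γ R l = b ^ (-γ) := if_pos ⟨hl, hbR⟩
    nlinarith [rpow_pos_of_pos hb (-γ)]
  by_cases haR : a ≤ R
  · have hbγ : b ^ (-γ) ≤ R ^ (-γ) := rpow_le_rpow_of_nonpos hR (by linarith) (by linarith)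
    have hinner : innerTerm α R (k - l) = a ^ (-α) := if_pos ⟨hkl, haR⟩
    nlinarith [rpow_pos_of_pos ha (-α)]
  have houter₁ : outerTerm (α + γ) R l = b ^ (-(α + γ)) := if_pos (not_le.1 hbR)
  have houter₂ : outerTerm (α + γ) R (k - l) = a ^ (-(α + γ)) := if_pos (not_le.1 haR)
  nlinarith [rpow_neg_mul_rpow_neg_le ha hb hα hγ]

lemma half_rpow_neg_le {K x β : ℝ} (hK : 1 ≤ K) (hβ : 0 ≤ β) (hβx : β ≤ x) :
    (K / 2) ^ (-x) ≤ 4 ^ x * (1 + K) ^ (-β) := by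
  calc (K / 2) ^ (-x) ≤ ((1 + K) / 4) ^ (-x) :=
        rpow_le_rpow_of_nonpos (by positivity) (by linarith) (by linarith)
    _ = 4 ^ x * (1 + K) ^ (-x) := by
        rw [div_rpow (by linarith) (by norm_num), rpow_neg (by norm_num : (0 : ℝ) ≤ 4),
          div_eq_mul_inv, inv_inv, mul_comm]
    _ ≤ 4 ^ x * (1 + K) ^ (-β) := by gcongr; linarith

lemma sum_pairSummand_le {α γ R : ℝ} (hα : 0 ≤ α) (hγ : 0 ≤ γ) (hR : 0 < R) {k : Fin d → ℤ}
    (hk : 2 * R ≤ latticeNorm k) (s : Finset (Fin d → ℤ)) :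
    ∑ l ∈ s, pairSummand α γ k l ≤
      R ^ (-α) * ∑ l ∈ s, innerTerm γ R l + R ^ (-γ) * ∑ m ∈ s.image (k - ·), innerTerm α R m +
        (∑ l ∈ s, outerTerm (α + γ) R l + ∑ m ∈ s.image (k - ·), outerTerm (α + γ) R m) := by
  have reflect : ∀ f : (Fin d → ℤ) → ℝ, ∑ l ∈ s, f (k - l) = ∑ m ∈ s.image (k - ·), f m :=
    fun f => (sum_image fun _ _ _ _ h => sub_right_injective h).symm
  rw [← reflect, ← reflect, mul_sum, mul_sum, ← sum_add_distrib, ← sum_add_distrib,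
    ← sum_add_distrib]
  exact sum_le_sum fun l _ => pairSummand_le hα hγ hR hk l

lemma min_min_sub_le_sub_max (a c e : ℝ) : min a (min c (a + c - e)) ≤ a - max (e - c) 0 := by
  rcases le_total (e - c) 0 with h | h
  · simpa only [max_eq_right h, sub_zero] using min_le_left _ _
  · rw [max_eq_left h]
    linarith [min_le_right a (min c (a + c - e)), min_le_right c (a + c - e)]

theorem exists_sum_pairSummand_le {α γ : ℝ} (hα : 0 < α) (hγ : 0 < γ) (hsum : (d : ℝ) < α + γ)
    (hαd : α ≠ d) (hγd : γ ≠ d) :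
    ∃ C : ℝ, 0 < C ∧ ∀ k : Fin d → ℤ, k ≠ 0 → ∀ s : Finset (Fin d → ℤ),
      ∑ l ∈ s, pairSummand α γ k l ≤ C * (1 + latticeNorm k) ^ (-(min α (min γ (α + γ - d)))) := by
  obtain ⟨Eγ, hEγ, hinnerγ⟩ := exists_sum_innerTerm_le (d := d) hγ hγd
  obtain ⟨Eα, hEα, hinnerα⟩ := exists_sum_innerTerm_le (d := d) hα hαd
  obtain ⟨E, hE, houter⟩ := exists_sum_outerTerm_le hsum
  set β := min α (min γ (α + γ - d))
  set x₁ := α - max ((d : ℝ) - γ) 0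
  set x₂ := γ - max ((d : ℝ) - α) 0
  set x₃ := α + γ - d
  have hβ : 0 ≤ β := le_min hα.le (le_min hγ.le (by linarith))
  have hx₁ : β ≤ x₁ := min_min_sub_le_sub_max α γ d
  have hx₂ : β ≤ x₂ := by
    simpa only [β, min_left_comm α γ, add_comm γ α] using min_min_sub_le_sub_max γ α d
  have hx₃ : β ≤ x₃ := (min_le_right _ _).trans (min_le_right _ _)
  refine ⟨Eγ * 4 ^ x₁ + Eα * 4 ^ x₂ + 2 * E * 4 ^ x₃ + 1, by positivity, fun k hk s => ?_⟩
  set K := latticeNorm k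
  set R := K / 2 with hRK
  have hK : 1 ≤ K := one_le_latticeNorm hk
  have hR : 0 < R := by positivity
  have hRpow : ∀ a b : ℝ, R ^ (-a) * R ^ b = R ^ (-(a - b)) := fun a b => by
    rw [← rpow_add hR]; ring_nf
  calc _ ≤ _ := sum_pairSummand_le hα.le hγ.le hR (by rw [hRK]; linarith) s
    _ ≤ R ^ (-α) * (Eγ * R ^ max ((d : ℝ) - γ) 0) + R ^ (-γ) * (Eα * R ^ max ((d : ℝ) - α) 0) +
          (E * R ^ ((d : ℝ) - (α + γ)) + E * R ^ ((d : ℝ) - (α + γ))) := by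
        gcongr
        · exact hinnerγ R hR s
        · exact hinnerα R hR _
        · exact houter R hR s
        · exact houter R hR _
    _ = Eγ * R ^ (-x₁) + Eα * R ^ (-x₂) + 2 * E * R ^ (-x₃) := by
        rw [mul_left_comm, hRpow, mul_left_comm (R ^ (-γ)), hRpow]
        simp only [x₁, x₂, x₃]
        ring_nf
    _ ≤ Eγ * (4 ^ x₁ * (1 + K) ^ (-β)) + Eα * (4 ^ x₂ * (1 + K) ^ (-β)) +
          2 * E * (4 ^ x₃ * (1 + K) ^ (-β)) := by
        gcongr <;> exact half_rpow_neg_le hK hβ ‹_›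
    _ ≤ _ := by nlinarith [rpow_nonneg (by positivity : (0 : ℝ) ≤ 1 + K) (-β)]

theorem stmt0_general (d : ℕ) (α γ : ℝ) (hα : 0 < α) (hγ : 0 < γ)
    (hsum : (d : ℝ) < α + γ) (hαd : α ≠ (d : ℝ)) (hγd : γ ≠ (d : ℝ)) :
    ∃ C : ℝ, 0 < C ∧ ∀ k : Fin d → ℤ, k ≠ 0 →
      (∑' l : Fin d → ℤ,
          if l ≠ 0 ∧ k - l ≠ 0 then
            1 / (latticeNorm (k - l) ^ α * latticeNorm l ^ γ)
          else 0)
        ≤ C * (1 + latticeNorm k) ^ (-(min α (min γ (α + γ - d)))) := by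
  obtain ⟨C, hC, hbound⟩ := exists_sum_pairSummand_le hα hγ hsum hαd hγd
  refine ⟨C, hC, fun k hk => tsum_le_of_sum_le' ?_ (hbound k hk)⟩
  exact mul_nonneg hC.le (rpow_nonneg (by linarith [latticeNorm_nonneg k]) _)

/-- Lemma 2.2 (non-logarithmic case): for `α, γ > 0` with `α + γ > d`, `α ≠ d`, `γ ≠ d`,
there is `C < ∞` such that for every nonzero `k ∈ ℤ^d`,
`∑_{l+m=k, l≠0, m≠0} 1/(|m|^α |l|^γ) ≤ C (1+|k|)^{-β}` with `β = min{α, γ, α+γ-d}`. -/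
theorem stmt0 (d : ℕ) (hd : 0 < d) (α γ : ℝ) (hα : 0 < α) (hγ : 0 < γ)
    (hsum : (d : ℝ) < α + γ) (hαd : α ≠ (d : ℝ)) (hγd : γ ≠ (d : ℝ)) :
    ∃ C : ℝ, 0 < C ∧ ∀ k : Fin d → ℤ, k ≠ 0 →
      (∑' l : Fin d → ℤ,
          if l ≠ 0 ∧ k - l ≠ 0 then
            1 / (latticeNorm (k - l) ^ α * latticeNorm l ^ γ)
          else 0)
        ≤ C * (1 + latticeNorm k) ^ (-(min α (min γ (α + γ - d)))) :=
  stmt0_general d α γ hα hγ hsum hαd hγd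
end

section
/- For the semi-implicit scheme u₋₁ ≡ 0, uₙ' = −uₙ + uₙ₋₁ uₙ, uₙ(0) = u₀ with u₀ ∈ [−1, 1], the sequence uₙ(t) converges as n → ∞, for each fixed t ≥ 0, to the solution u(t) of u' = −u + u², u(0) = u₀. -/
open Set Filter Real
open scoped Nat

/-!
Each `uₙ` solves a linear equation `uₙ' = (uₙ₋₁ - 1) uₙ`; inductively `uₙ₋₁ ≤ 1`, so `uₙ²` is
nonincreasing and `|uₙ| ≤ 1`. The errors `eₙ = uₙ - u` satisfy
`eₙ₊₁' = (u - 1) eₙ₊₁ + uₙ₊₁ eₙ` with `eₙ₊₁(0) = 0`, so on `[0, T]`, where `|u - 1| ≤ K` and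
`|e₀| ≤ C`, the comparison principle gives the Picard-type bound
`|eₙ(x)| ≤ C xⁿ / n! · e^{Kx}`, which tends to `0`.
-/

theorem abs_le_abs_of_hasDerivWithinAt_mul {f c : ℝ → ℝ} {a : ℝ}
    (hf : ∀ x, a ≤ x → HasDerivWithinAt f (c x * f x) (Ici a) x)
    (hc : ∀ x, a ≤ x → c x ≤ 0) {x : ℝ} (hx : a ≤ x) : |f x| ≤ |f a| := by
  have hsq : AntitoneOn (fun y => f y ^ 2) (Ici a) := by
    refine antitoneOn_of_hasDerivWithinAt_nonpos (convex_Ici a)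
      (fun y hy => ((hf y hy).continuousWithinAt).pow 2) (fun y hy => ?_) (fun y hy => ?_)
      (f' := fun y => 2 * c y * f y ^ 2)
    · rw [interior_Ici] at hy
      exact ((((hf y hy.le).hasDerivAt (Ici_mem_nhds hy)).fun_pow 2).congr_deriv
        (by ring)).hasDerivWithinAt
    · rw [interior_Ici] at hy
      nlinarith [hc y hy.le, sq_nonneg (f y)]
  exact sq_le_sq.1 (hsq self_mem_Ici hx hx)

theorem hasDerivAt_pow_succ_div_factorial (n : ℕ) (x : ℝ) :
    HasDerivAt (fun y : ℝ => y ^ (n + 1) / (n + 1)!) (x ^ n / n !) x := by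
  refine ((hasDerivAt_pow (n + 1) x).div_const _).congr_deriv ?_
  rw [Nat.factorial_succ, Nat.cast_mul]
  field_simp
  push_cast
  ring

theorem norm_le_of_norm_deriv_right_le_mul_add {E : Type*} [NormedAddCommGroup E]
    [NormedSpace ℝ E] {f f' : ℝ → E} {B B' g : ℝ → ℝ} {K a b : ℝ}
    (hf : ContinuousOn f (Icc a b)) (hf' : ∀ x ∈ Ico a b, HasDerivWithinAt f (f' x) (Ici x) x)
    (ha : ‖f a‖ ≤ B a) (hB : ContinuousOn B (Icc a b))
    (hB' : ∀ x ∈ Ico a b, HasDerivWithinAt B (B' x) (Ici x) x)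
    (hB'_ge : ∀ x ∈ Ico a b, K * B x + g x ≤ B' x)
    (bound : ∀ x ∈ Ico a b, ‖f' x‖ ≤ K * ‖f x‖ + g x) :
    ∀ x ∈ Icc a b, ‖f x‖ ≤ B x := by
  -- the slack `δ e^{(K+1)(x-a)}` turns the supersolution `B` into a strict one
  have hslack : ∀ δ > 0, ∀ x ∈ Icc a b, ‖f x‖ ≤ B x + δ * exp ((K + 1) * (x - a)) := by
    intro δ hδ
    have hE : ∀ x, HasDerivAt (fun y => δ * exp ((K + 1) * (y - a)))
        ((K + 1) * (δ * exp ((K + 1) * (x - a)))) x := fun x =>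
      ((((hasDerivAt_id x).sub_const a).const_mul (K + 1)).exp.const_mul δ).congr_deriv
        (by simp only [id]; ring)
    refine image_norm_le_of_norm_deriv_right_lt_deriv_boundary' hf hf'
      (by simpa using ha.trans (le_add_of_nonneg_right hδ.le))
      (hB.add (continuous_const.mul ((continuous_const.mul
        (continuous_id.sub continuous_const)).rexp)).continuousOn)
      (fun x hx => (hB' x hx).add (hE x).hasDerivWithinAt) fun x hx hfx => ?_
    have hpos : 0 < δ * exp ((K + 1) * (x - a)) := by positivity
    calc ‖f' x‖ ≤ K * ‖f x‖ + g x := bound x hx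
      _ = K * B x + g x + K * (δ * exp ((K + 1) * (x - a))) := by rw [hfx]; ring
      _ < B' x + (K + 1) * (δ * exp ((K + 1) * (x - a))) := by linarith [hB'_ge x hx]
  intro x hx
  refine le_of_forall_pos_le_add fun ε hε => ?_
  simpa [div_mul_cancel₀ _ (exp_pos _).ne'] using
    hslack (ε / exp ((K + 1) * (x - a))) (by positivity) x hx

theorem abs_le_one_of_semiImplicit {u₀ : ℝ} (h : |u₀| ≤ 1) {useq : ℕ → ℝ → ℝ}
    (h0 : ∀ n, useq n 0 = u₀)
    (hode0 : ∀ t : ℝ, 0 ≤ t → HasDerivWithinAt (useq 0) (-(useq 0 t)) (Set.Ici 0) t)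
    (hode : ∀ n, ∀ t : ℝ, 0 ≤ t →
      HasDerivWithinAt (useq (n + 1))
        (-(useq (n + 1) t) + useq n t * useq (n + 1) t) (Set.Ici 0) t)
    (n : ℕ) {t : ℝ} (ht : 0 ≤ t) : |useq n t| ≤ 1 := by
  induction n generalizing t with
  | zero =>
    refine (abs_le_abs_of_hasDerivWithinAt_mul (c := fun _ => -1)
      (fun x hx => (hode0 x hx).congr_deriv (by ring)) (fun _ _ => by norm_num) ht).trans ?_
    rwa [h0]
  | succ n ih =>
    refine (abs_le_abs_of_hasDerivWithinAt_mul (c := fun x => useq n x - 1)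
      (fun x hx => (hode n x hx).congr_deriv (by ring))
      (fun x hx => by linarith [(abs_le.1 (ih hx)).2]) ht).trans ?_
    rwa [h0]

theorem abs_sub_le_of_semiImplicit {u₀ K C T : ℝ} {useq : ℕ → ℝ → ℝ} {u : ℝ → ℝ}
    (h0 : ∀ n, useq n 0 = u₀)
    (hode : ∀ n, ∀ t : ℝ, 0 ≤ t →
      HasDerivWithinAt (useq (n + 1))
        (-(useq (n + 1) t) + useq n t * useq (n + 1) t) (Set.Ici 0) t)
    (hu0 : u 0 = u₀)
    (hu : ∀ t : ℝ, 0 ≤ t → HasDerivWithinAt u (-u t + (u t) ^ 2) (Set.Ici 0) t)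
    (hbound : ∀ n, ∀ x, 0 ≤ x → |useq n x| ≤ 1)
    (hK : ∀ x ∈ Icc 0 T, |u x - 1| ≤ K) (hC : ∀ x ∈ Icc 0 T, |useq 0 x - u x| ≤ C) (n : ℕ) :
    ∀ x ∈ Icc 0 T, |useq n x - u x| ≤ C * (x ^ n / n !) * exp (K * x) := by
  induction n with
  | zero =>
    intro x hx
    have hK0 : 0 ≤ K := (abs_nonneg _).trans (hK x hx)
    have hC0 : 0 ≤ C := (abs_nonneg _).trans (hC x hx)
    simpa using (hC x hx).trans (le_mul_of_one_le_right hC0 (one_le_exp (by nlinarith [hx.1])))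
  | succ n ih =>
    have herr : ∀ x, 0 ≤ x → HasDerivWithinAt (fun y => useq (n + 1) y - u y)
        ((u x - 1) * (useq (n + 1) x - u x) + useq (n + 1) x * (useq n x - u x)) (Ici 0) x :=
      fun x hx => ((hode n x hx).sub (hu x hx)).congr_deriv (by ring)
    have hB : ∀ x, HasDerivAt (fun y => C * (y ^ (n + 1) / (n + 1)!) * exp (K * y))
        (K * (C * (x ^ (n + 1) / (n + 1)!) * exp (K * x)) + C * (x ^ n / n !) * exp (K * x)) x :=
      fun x => (((hasDerivAt_pow_succ_div_factorial n x).const_mul C).mul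
        ((hasDerivAt_id x).const_mul K).exp).congr_deriv (by simp only [id]; ring)
    simp only [← Real.norm_eq_abs]
    refine norm_le_of_norm_deriv_right_le_mul_add (K := K)
      (fun x hx => (herr x hx.1).continuousWithinAt.mono Icc_subset_Ici_self)
      (fun x hx => (herr x hx.1).mono (Ici_subset_Ici.2 hx.1)) (by simp [h0, hu0])
      (fun x _ => (hB x).continuousAt.continuousWithinAt) (fun x _ => (hB x).hasDerivWithinAt)
      (fun x _ => le_rfl) fun x hx => ?_
    have hxT : x ∈ Icc 0 T := Ico_subset_Icc_self hx
    simp only [Real.norm_eq_abs]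
    calc |(u x - 1) * (useq (n + 1) x - u x) + useq (n + 1) x * (useq n x - u x)|
        ≤ |u x - 1| * |useq (n + 1) x - u x| + |useq (n + 1) x| * |useq n x - u x| := by
          rw [← abs_mul, ← abs_mul]; exact abs_add_le _ _
      _ ≤ K * |useq (n + 1) x - u x| + 1 * (C * (x ^ n / n !) * exp (K * x)) := by
          gcongr
          · exact hK x hxT
          · exact hbound (n + 1) x hx.1
          · exact ih x hxT
      _ = _ := by ring

/-- For `u₀ ∈ [-1, 1]`, the semi-implicit scheme `u₋₁ ≡ 0`, `uₙ' = -uₙ + uₙ₋₁ uₙ`,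
`uₙ(0) = u₀` converges, for each fixed `t ≥ 0`, to the solution of `u' = -u + u²`,
`u(0) = u₀`. -/
theorem stmt7 (u₀ : ℝ) (h : |u₀| ≤ 1)
    (useq : ℕ → ℝ → ℝ)
    (h0 : ∀ n, useq n 0 = u₀)
    (hode0 : ∀ t : ℝ, 0 ≤ t → HasDerivWithinAt (useq 0) (-(useq 0 t)) (Set.Ici 0) t)
    (hode : ∀ n, ∀ t : ℝ, 0 ≤ t →
      HasDerivWithinAt (useq (n + 1))
        (-(useq (n + 1) t) + useq n t * useq (n + 1) t) (Set.Ici 0) t)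
    (u : ℝ → ℝ) (hu0 : u 0 = u₀)
    (hu : ∀ t : ℝ, 0 ≤ t → HasDerivWithinAt u (-u t + (u t) ^ 2) (Set.Ici 0) t) :
    ∀ t : ℝ, 0 ≤ t → Tendsto (fun n => useq n t) atTop (nhds (u t)) := by
  intro t ht
  have hu_cont : ContinuousOn u (Icc 0 t) := fun x hx =>
    (hu x hx.1).continuousWithinAt.mono Icc_subset_Ici_self
  have hu₀_cont : ContinuousOn (useq 0) (Icc 0 t) := fun x hx =>
    (hode0 x hx.1).continuousWithinAt.mono Icc_subset_Ici_self
  obtain ⟨K, hK⟩ := isCompact_Icc.exists_bound_of_continuousOn (hu_cont.sub continuousOn_const)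
  obtain ⟨C, hC⟩ := isCompact_Icc.exists_bound_of_continuousOn (hu₀_cont.sub hu_cont)
  have herr := abs_sub_le_of_semiImplicit h0 hode hu0 hu
    (fun n x hx => abs_le_one_of_semiImplicit h h0 hode0 hode n hx) hK hC
  have hlim : Tendsto (fun n => C * (t ^ n / n !) * exp (K * t)) atTop (nhds 0) := by
    simpa using ((FloorSemiring.tendsto_pow_div_factorial_atTop t).const_mul C).mul_const
      (exp (K * t))
  simpa using (squeeze_zero_norm (fun n => herr n t ⟨ht, le_rfl⟩) hlim).add_const (u t)
end

section
/- Weak solutions of the one-dimensional periodic Burgers equation ∂_t u = ∂_x² u + u ∂_x u + f with u ∈ L²([0,T], H²) ∩ H¹([0,T], L²) and given initial data u(0) ∈ H¹ are unique. -/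
/-!
The energy `‖w(t)‖²` of the difference `w = u₁ - u₂` (in `L²` of the period) satisfies
`d/dt ‖w‖² ≤ g(t) ‖w‖²` with `g = 2 + ‖u₁‖²_{H²} + ‖u₂‖²_{H²} ∈ L¹(0, T)`: the forcing cancels,
and after integrating by parts over a period the viscous term contributes `-2 ‖∂ₓw‖² ≤ 0` while
the nonlinear term becomes `∫ (2 ∂ₓu₂ - ∂ₓu₁) w²`, where `‖∂ₓu‖²_∞ ≤ ‖u‖²_{H²}` because `∂ₓu`
vanishes somewhere in each period. Integrating the pointwise time derivative over space-time needs
Fubini, which applies because `u` is bounded and `∂ₓu, ∂ₓ²u ∈ L²` on the space-time cylinder.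
Since `w(0) = 0`, Gronwall's inequality gives `w = 0`.
-/

open Set Real MeasureTheory intervalIntegral

/-- Squared `H²` norm on the circle `[0, 2π)`. -/
noncomputable def H2sq (g : ℝ → ℝ) : ℝ :=
  ∫ x in (0:ℝ)..(2 * π), (g x) ^ 2 + (deriv g x) ^ 2 + (deriv (deriv g) x) ^ 2

/-- `u` is a solution of the periodic Burgers equation `∂_t u = ∂_x² u + u ∂_x u + f`
on `[0,T]` in the regularity class `L²([0,T], H²) ∩ H¹([0,T], L²)`. -/
def IsBurgersSol (T : ℝ) (f u : ℝ → ℝ → ℝ) : Prop :=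
  Continuous (Function.uncurry u) ∧
  (∀ t x, u t (x + 2 * π) = u t x) ∧
  (∀ t ∈ Set.Ioc (0:ℝ) T, ContDiff ℝ 2 (u t)) ∧
  (∀ t ∈ Set.Ioo (0:ℝ) T, ∀ x,
    HasDerivAt (fun s => u s x)
      (deriv (deriv (u t)) x + u t x * deriv (u t) x + f t x) t) ∧
  IntervalIntegrable (fun t => H2sq (u t)) MeasureTheory.volume 0 T

open Topology Filter

noncomputable def L2sq (g : ℝ → ℝ) : ℝ :=
  ∫ x in (0:ℝ)..(2 * π), (g x) ^ 2

noncomputable def burgersRHS (v : ℝ → ℝ) (x : ℝ) : ℝ :=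
  deriv (deriv v) x + v x * deriv v x

theorem Function.Periodic.deriv {v : ℝ → ℝ} {c : ℝ} (h : Function.Periodic v c) :
    Function.Periodic (deriv v) c := fun x => by
  rw [← deriv_comp_add_const, show (fun y => v (y + c)) = v from funext h]

theorem Function.Periodic.integral_deriv_eq_zero {v v' : ℝ → ℝ} {c : ℝ}
    (h : Function.Periodic v c) (hv : ∀ x, HasDerivAt v (v' x) x) (hv' : Continuous v') :
    ∫ x in (0:ℝ)..c, v' x = 0 := by
  rw [intervalIntegral.integral_eq_sub_of_hasDerivAt (fun x _ => hv x)
    (hv'.intervalIntegrable _ _), ← zero_add c, h, sub_self]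

theorem Function.Periodic.eq_zero_of_integral_sq_eq_zero {v : ℝ → ℝ} {c : ℝ}
    (h : Function.Periodic v c) (hc : 0 < c) (hv : Continuous v)
    (h0 : ∫ x in (0:ℝ)..c, v x ^ 2 = 0) (x : ℝ) : v x = 0 := by
  rw [intervalIntegral.integral_eq_zero_iff_of_le_of_nonneg_ae hc.le
    (Eventually.of_forall fun _ => sq_nonneg _) ((hv.pow 2).intervalIntegrable _ _)] at h0
  obtain ⟨y, hy, hxy⟩ := h.exists_mem_Ioc hc x 0
  rw [zero_add] at hy
  rw [hxy]
  exact pow_eq_zero_iff two_ne_zero |>.1 <|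
    Measure.eqOn_Ioc_of_ae_eq _ h0 (hv.pow 2).continuousOn continuousOn_const hy

theorem ContDiff.differentiable_deriv_of_two {v : ℝ → ℝ} (hv : ContDiff ℝ 2 v) :
    Differentiable ℝ (deriv v) :=
  (hv.deriv' (n := 1)).differentiable one_ne_zero

theorem ContDiff.continuous_deriv_deriv_of_two {v : ℝ → ℝ} (hv : ContDiff ℝ 2 v) :
    Continuous (deriv (deriv v)) :=
  (hv.deriv' (n := 1)).continuous_deriv le_rfl

theorem H2sq_nonneg (v : ℝ → ℝ) : 0 ≤ H2sq v :=
  intervalIntegral.integral_nonneg two_pi_pos.le fun _ _ => by positivity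

theorem L2sq_nonneg (v : ℝ → ℝ) : 0 ≤ L2sq v :=
  intervalIntegral.integral_nonneg two_pi_pos.le fun _ _ => sq_nonneg _

theorem sq_deriv_le_H2sq {v : ℝ → ℝ} (hv : ContDiff ℝ 2 v) (hp : Function.Periodic v (2 * π))
    {x : ℝ} (hx : x ∈ Icc 0 (2 * π)) : deriv v x ^ 2 ≤ H2sq v := by
  have hd := hv.differentiable two_ne_zero
  have hd' := hv.differentiable_deriv_of_two
  have hd'' := hv.continuous_deriv_deriv_of_two
  -- Rolle: the derivative of a periodic function vanishes somewhere in each period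
  obtain ⟨x₀, hx₀, hx₀0⟩ := exists_deriv_eq_zero two_pi_pos hd.continuous.continuousOn
    (by simpa using (hp 0).symm)
  have hφ : Continuous fun y => 2 * deriv v y * deriv (deriv v) y :=
    (continuous_const.mul hd'.continuous).mul hd''
  have hftc : ∫ y in x₀..x, 2 * deriv v y * deriv (deriv v) y = deriv v x ^ 2 := by
    rw [intervalIntegral.integral_eq_sub_of_hasDerivAt (f := fun y => deriv v y ^ 2)
      (fun y _ => by simpa using (hd' y).hasDerivAt.fun_pow 2) (hφ.intervalIntegrable _ _), hx₀0]
    ring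
  calc deriv v x ^ 2 ≤ |(∫ y in x₀..x, |2 * deriv v y * deriv (deriv v) y|)| := by
        rw [← hftc]
        exact (le_abs_self _).trans <| by
          simpa only [Real.norm_eq_abs] using intervalIntegral.norm_integral_le_abs_integral_norm
            (f := fun y => 2 * deriv v y * deriv (deriv v) y) (μ := volume)
    _ ≤ |(∫ y in (0:ℝ)..2 * π, |2 * deriv v y * deriv (deriv v) y|)| := by
        refine intervalIntegral.abs_integral_mono_interval ?_
          (Eventually.of_forall fun _ => abs_nonneg _) (hφ.abs.intervalIntegrable _ _)
        rw [uIoc_of_le two_pi_pos.le]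
        exact Ioc_subset_Ioc (le_min hx₀.1.le hx.1) (max_le hx₀.2.le hx.2)
    _ ≤ H2sq v := by
        rw [abs_of_nonneg (intervalIntegral.integral_nonneg two_pi_pos.le fun _ _ => abs_nonneg _)]
        refine intervalIntegral.integral_mono_on two_pi_pos.le (hφ.abs.intervalIntegrable _ _)
          ((((hd.continuous.pow 2).add (hd'.continuous.pow 2)).add
            (hd''.pow 2)).intervalIntegrable _ _)
          fun y _ => ?_
        rw [abs_le]
        constructor <;> nlinarith [sq_nonneg (v y), sq_nonneg (deriv v y + deriv (deriv v) y),
          sq_nonneg (deriv v y - deriv (deriv v) y)]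

theorem integral_energy_flux_le {v₁ v₂ : ℝ → ℝ} (h₁ : ContDiff ℝ 2 v₁) (h₂ : ContDiff ℝ 2 v₂)
    (hp₁ : Function.Periodic v₁ (2 * π)) (hp₂ : Function.Periodic v₂ (2 * π)) :
    ∫ x in (0:ℝ)..2 * π, 2 * (v₁ x - v₂ x) * (burgersRHS v₁ x - burgersRHS v₂ x)
      ≤ (2 + H2sq v₁ + H2sq v₂) * L2sq (v₁ - v₂) := by
  have hd₁ := h₁.differentiable two_ne_zero
  have hd₂ := h₂.differentiable two_ne_zero
  have hd₁' := h₁.differentiable_deriv_of_two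
  have hd₂' := h₂.differentiable_deriv_of_two
  have hc₁ := h₁.continuous_deriv_deriv_of_two
  have hc₂ := h₂.continuous_deriv_deriv_of_two
  set w := fun x => v₁ x - v₂ x
  set w' := fun x => deriv v₁ x - deriv v₂ x
  -- `2 w (burgersRHS v₁ - burgersRHS v₂) = Φ' + R` with `Φ` periodic and `R ≤ (2 v₂' - v₁') w²`
  set Φ := fun x => 2 * w x * w' x + v₁ x * w x ^ 2
  set Φ' := fun x => 2 * w' x ^ 2 + 2 * w x * (deriv (deriv v₁) x - deriv (deriv v₂) x)
    + (deriv v₁ x * w x ^ 2 + v₁ x * (2 * w x * w' x))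
  set R := fun x => (2 * deriv v₂ x - deriv v₁ x) * w x ^ 2 - 2 * w' x ^ 2
  have hw : ∀ x, HasDerivAt w (w' x) x := fun x =>
    (hd₁ x).hasDerivAt.sub (hd₂ x).hasDerivAt
  have hw' : ∀ x, HasDerivAt w' (deriv (deriv v₁) x - deriv (deriv v₂) x) x := fun x =>
    (hd₁' x).hasDerivAt.sub (hd₂' x).hasDerivAt
  have hΦ : ∀ x, HasDerivAt Φ (Φ' x) x := fun x =>
    (((hw x).const_mul 2).mul (hw' x)).add ((hd₁ x).hasDerivAt.mul ((hw x).fun_pow 2))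
      |>.congr_deriv (by simp only [Φ']; ring)
  have hΦp : Function.Periodic Φ (2 * π) := fun x => by
    simp only [Φ, w, w', hp₁ x, hp₂ x, hp₁.deriv x, hp₂.deriv x]
  have hcv₁ := hd₁.continuous
  have hcv₂ := hd₂.continuous
  have hcd₁ := hd₁'.continuous
  have hcd₂ := hd₂'.continuous
  have hcw : Continuous w := by fun_prop
  have hcΦ' : Continuous Φ' := by fun_prop
  have hcR : Continuous R := by fun_prop
  calc ∫ x in (0:ℝ)..2 * π, 2 * (v₁ x - v₂ x) * (burgersRHS v₁ x - burgersRHS v₂ x)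
      = ∫ x in (0:ℝ)..2 * π, Φ' x + R x := by
        refine intervalIntegral.integral_congr fun x _ => ?_
        simp only [Φ', R, w, w', burgersRHS]
        ring
    _ = ∫ x in (0:ℝ)..2 * π, R x := by
        rw [intervalIntegral.integral_add (hcΦ'.intervalIntegrable _ _)
          (hcR.intervalIntegrable _ _), hΦp.integral_deriv_eq_zero hΦ hcΦ', zero_add]
    _ ≤ ∫ x in (0:ℝ)..2 * π, (2 + H2sq v₁ + H2sq v₂) * w x ^ 2 := by
        refine intervalIntegral.integral_mono_on two_pi_pos.le (hcR.intervalIntegrable _ _)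
          ((continuous_const.mul (hcw.pow 2)).intervalIntegrable _ _) fun x hx => ?_
        have hs₁ := sq_deriv_le_H2sq h₁ hp₁ hx
        have hs₂ := sq_deriv_le_H2sq h₂ hp₂ hx
        have hK : 2 * deriv v₂ x - deriv v₁ x ≤ 2 + H2sq v₁ + H2sq v₂ := by
          nlinarith [sq_nonneg (deriv v₂ x - 1), sq_nonneg (deriv v₁ x + 1)]
        have := mul_le_mul_of_nonneg_right hK (sq_nonneg (w x))
        nlinarith [sq_nonneg (w' x)]
    _ = (2 + H2sq v₁ + H2sq v₂) * L2sq (v₁ - v₂) := intervalIntegral.integral_const_mul _ _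

theorem aestronglyMeasurable_deriv_with_param_of_measurable {f : ℝ → ℝ → ℝ}
    (hf : Measurable (Function.uncurry f))
    {μ : Measure (ℝ × ℝ)} (hd : ∀ᵐ p ∂μ, DifferentiableAt ℝ (f p.1) p.2) :
    AEStronglyMeasurable (fun p => deriv (f p.1) p.2) μ := by
  have hshift : ∀ h : ℝ, Measurable fun p : ℝ × ℝ => f p.1 (p.2 + h) := fun h =>
    hf.comp (measurable_fst.prodMk (measurable_snd.add_const h))
  refine aestronglyMeasurable_of_tendsto_ae atTop (f := fun (n : ℕ) p =>
    (1 / ((n : ℝ) + 1))⁻¹ * (f p.1 (p.2 + 1 / ((n : ℝ) + 1)) - f p.1 p.2))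
    (fun n => ((hshift _).sub hf).const_mul _ |>.aestronglyMeasurable) ?_
  filter_upwards [hd] with p hp
  have hn : Tendsto (fun n : ℕ => 1 / ((n : ℝ) + 1)) atTop (𝓝[>] 0) :=
    tendsto_nhdsWithin_iff.2 ⟨tendsto_one_div_add_atTop_nhds_zero_nat,
      Eventually.of_forall fun _ => mem_Ioi.2 Nat.one_div_pos_of_nat⟩
  exact hp.hasDerivAt.tendsto_slope_zero_right.comp hn

noncomputable abbrev cylinderMeasure (t : ℝ) : Measure (ℝ × ℝ) :=
  (volume.restrict (Ioc 0 t)).prod (volume.restrict (Ioc 0 (2 * π)))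

theorem ae_mem_cylinderMeasure (t : ℝ) :
    ∀ᵐ p ∂cylinderMeasure t, p ∈ Ioc 0 t ×ˢ Ioc 0 (2 * π) := by
  rw [cylinderMeasure, Measure.prod_restrict]
  exact ae_restrict_mem (measurableSet_Ioc.prod measurableSet_Ioc)

theorem Continuous.exists_ae_norm_le_cylinderMeasure {φ : ℝ × ℝ → ℝ} (hφ : Continuous φ) (t : ℝ) :
    ∃ C, ∀ᵐ p ∂cylinderMeasure t, ‖φ p‖ ≤ C := by
  obtain ⟨C, hC⟩ := (isCompact_Icc.prod isCompact_Icc).exists_bound_of_continuousOn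
    (hφ.continuousOn (s := Icc 0 t ×ˢ Icc 0 (2 * π)))
  exact ⟨C, (ae_mem_cylinderMeasure t).mono fun p hp =>
    hC p ⟨Ioc_subset_Icc_self hp.1, Ioc_subset_Icc_self hp.2⟩⟩

section Cylinder

variable {u : ℝ → ℝ → ℝ} {T t : ℝ}

theorem aestronglyMeasurable_deriv_deriv_cylinderMeasure (hc : Continuous (Function.uncurry u))
    (hreg : ∀ s ∈ Ioc 0 T, ContDiff ℝ 2 (u s)) (ht : t ≤ T) :
    AEStronglyMeasurable (fun p : ℝ × ℝ => deriv (deriv (u p.1)) p.2) (cylinderMeasure t) :=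
  aestronglyMeasurable_deriv_with_param_of_measurable (f := fun s => deriv (u s))
    (measurable_deriv_with_param hc) <|
    (ae_mem_cylinderMeasure t).mono fun p hp =>
      (hreg p.1 ⟨hp.1.1, hp.1.2.trans ht⟩).differentiable_deriv_of_two p.2

theorem integrable_H2sq_integrand (hc : Continuous (Function.uncurry u))
    (hreg : ∀ s ∈ Ioc 0 T, ContDiff ℝ 2 (u s))
    (hH : IntervalIntegrable (fun s => H2sq (u s)) volume 0 T) (ht : t ≤ T) :
    Integrable (fun p : ℝ × ℝ => u p.1 p.2 ^ 2 + deriv (u p.1) p.2 ^ 2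
      + deriv (deriv (u p.1)) p.2 ^ 2) (cylinderMeasure t) := by
  have hmeas : AEStronglyMeasurable (fun p : ℝ × ℝ =>
      u p.1 p.2 ^ 2 + deriv (u p.1) p.2 ^ 2 + deriv (deriv (u p.1)) p.2 ^ 2) (cylinderMeasure t) :=
    ((hc.aestronglyMeasurable.pow 2).add ((aestronglyMeasurable_deriv_with_param hc _).pow 2)).add
      ((aestronglyMeasurable_deriv_deriv_cylinderMeasure hc hreg ht).pow 2)
  refine (integrable_prod_iff hmeas).2 ⟨?_, ?_⟩
  · filter_upwards [ae_restrict_mem measurableSet_Ioc] with s hs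
    have hv := hreg s ⟨hs.1, hs.2.trans ht⟩
    exact Continuous.integrableOn_Ioc (by
      have := (hv.differentiable two_ne_zero).continuous
      have := hv.differentiable_deriv_of_two.continuous
      have := hv.continuous_deriv_deriv_of_two
      fun_prop)
  · refine (hH.1.mono_set (Ioc_subset_Ioc_right ht)).congr (Eventually.of_forall fun s => ?_)
    simp only [H2sq, intervalIntegral.integral_of_le two_pi_pos.le, Real.norm_eq_abs]
    exact integral_congr_ae (Eventually.of_forall fun x => (abs_of_nonneg (by positivity)).symm)

theorem integrable_burgersRHS (hc : Continuous (Function.uncurry u))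
    (hreg : ∀ s ∈ Ioc 0 T, ContDiff ℝ 2 (u s))
    (hH : IntervalIntegrable (fun s => H2sq (u s)) volume 0 T) (ht : t ≤ T) :
    Integrable (fun p : ℝ × ℝ => burgersRHS (u p.1) p.2) (cylinderMeasure t) := by
  have hq := integrable_H2sq_integrand hc hreg hH ht
  -- both derivatives are in `L²`, hence in `L¹` on the finite measure space
  have hL1 : ∀ {φ : ℝ × ℝ → ℝ}, AEStronglyMeasurable φ (cylinderMeasure t) →
      (∀ p : ℝ × ℝ, φ p ^ 2 ≤ u p.1 p.2 ^ 2 + deriv (u p.1) p.2 ^ 2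
        + deriv (deriv (u p.1)) p.2 ^ 2) → Integrable φ (cylinderMeasure t) := fun hm hφ =>
    ((memLp_two_iff_integrable_sq hm).2 (hq.mono' (hm.pow 2) (Eventually.of_forall fun p => by
      rw [Real.norm_eq_abs, abs_of_nonneg (sq_nonneg _)]; exact hφ p))).integrable one_le_two
  have hd := hL1 (aestronglyMeasurable_deriv_with_param hc _) fun p => by
    nlinarith [sq_nonneg (u p.1 p.2), sq_nonneg (deriv (deriv (u p.1)) p.2)]
  have hdd := hL1 (aestronglyMeasurable_deriv_deriv_cylinderMeasure hc hreg ht) fun p => by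
    nlinarith [sq_nonneg (u p.1 p.2), sq_nonneg (deriv (u p.1) p.2)]
  obtain ⟨B, hB⟩ := hc.exists_ae_norm_le_cylinderMeasure t
  exact hdd.add (hd.bdd_mul hc.aestronglyMeasurable hB)

end Cylinder

theorem integral_sub_eq_integral_integral_of_hasDerivAt {β : Type*} [MeasurableSpace β]
    {ν : Measure β} [SFinite ν] {W F : ℝ → β → ℝ} {a b : ℝ} (hab : a ≤ b)
    (hW : ∀ x, ContinuousOn (W · x) (Icc a b))
    (hWF : ∀ s ∈ Ioo a b, ∀ x, HasDerivAt (W · x) (F s x) s)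
    (hF : Integrable (Function.uncurry F) ((volume.restrict (Ioc a b)).prod ν))
    (ha : Integrable (W a) ν) (hb : Integrable (W b) ν) :
    ∫ x, W b x ∂ν - ∫ x, W a x ∂ν = ∫ s in a..b, ∫ x, F s x ∂ν := by
  rw [← integral_sub hb ha, intervalIntegral.integral_of_le hab, integral_integral_swap hF]
  refine integral_congr_ae ?_
  filter_upwards [hF.prod_left_ae] with x hx
  rw [← intervalIntegral.integral_of_le hab,
    intervalIntegral.integral_eq_sub_of_hasDeriv_right_of_le hab (hW x)
      (fun s hs => (hWF s hs x).hasDerivWithinAt)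
      ((intervalIntegrable_iff_integrableOn_Ioc_of_le hab).2 hx)]

theorem IntervalIntegrable.exists_integral_lt {g : ℝ → ℝ} {x b ε : ℝ}
    (hg : IntervalIntegrable g volume x b) (hxb : x < b) (hε : 0 < ε) :
    ∃ z ∈ Ioc x b, ∫ s in x..z, g s < ε := by
  have hcont : ContinuousWithinAt (fun z => ∫ s in x..z, g s) (Ioi x) x := by
    refine ((intervalIntegral.continuousOn_primitive_interval' hg left_mem_uIcc) x
      left_mem_uIcc).mono_of_mem_nhdsWithin ?_
    rw [uIcc_of_le hxb.le]
    exact Icc_mem_nhdsGT hxb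
  have hsmall : ∀ᶠ z in 𝓝[>] x, ∫ s in x..z, g s < ε :=
    Tendsto.eventually_lt_const (v := ∫ s in x..x, g s) (by simpa using hε) hcont
  obtain ⟨z, hz, hzI⟩ := (hsmall.and (Ioc_mem_nhdsGT hxb)).exists
  exact ⟨z, hzI, hz⟩

section Gronwall

variable {E g : ℝ → ℝ} {a b : ℝ}

theorem eqOn_zero_of_le_integral_mul_of_integral_lt_one (hab : a ≤ b)
    (hE : ContinuousOn E (Icc a b)) (hE₀ : ∀ t ∈ Icc a b, 0 ≤ E t) (hg₀ : ∀ t ∈ Icc a b, 0 ≤ g t)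
    (hg : IntervalIntegrable g volume a b) (hg₁ : ∫ s in a..b, g s < 1)
    (h : ∀ t ∈ Icc a b, E t ≤ ∫ s in a..t, g s * E s) : ∀ t ∈ Icc a b, E t = 0 := by
  obtain ⟨m, hm, hmax⟩ := isCompact_Icc.exists_isMaxOn (nonempty_Icc.2 hab) hE
  have hsub : uIcc a m ⊆ uIcc a b := by
    rw [uIcc_of_le hm.1, uIcc_of_le hab]; exact Icc_subset_Icc_right hm.2
  have hEm : E m ≤ (∫ s in a..b, g s) * E m := calc
    E m ≤ ∫ s in a..m, g s * E s := h m hm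
    _ ≤ ∫ s in a..m, g s * E m := by
        refine intervalIntegral.integral_mono_on hm.1
          ((hg.mul_continuousOn (by rwa [uIcc_of_le hab])).mono_set hsub)
          ((hg.mono_set hsub).mul_const _) fun s hs => ?_
        have hs' : s ∈ Icc a b := ⟨hs.1, hs.2.trans hm.2⟩
        exact mul_le_mul_of_nonneg_left (hmax hs') (hg₀ s hs')
    _ = (∫ s in a..m, g s) * E m := intervalIntegral.integral_mul_const _ _
    _ ≤ (∫ s in a..b, g s) * E m := by
        refine mul_le_mul_of_nonneg_right (intervalIntegral.integral_mono_interval le_rfl hm.1 hm.2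
          ?_ hg) (hE₀ m hm)
        exact (ae_restrict_mem measurableSet_Ioc).mono fun s hs => hg₀ s (Ioc_subset_Icc_self hs)
  have hm0 : E m = 0 := by nlinarith [hE₀ m hm]
  exact fun t ht => le_antisymm ((hmax ht).trans hm0.le) (hE₀ t ht)

theorem eqOn_zero_of_le_integral_mul
    (hE : ContinuousOn E (Icc a b)) (hE₀ : ∀ t ∈ Icc a b, 0 ≤ E t) (hg₀ : ∀ t ∈ Icc a b, 0 ≤ g t)
    (hg : IntervalIntegrable g volume a b)
    (h : ∀ t ∈ Icc a b, E t ≤ ∫ s in a..t, g s * E s) : ∀ t ∈ Icc a b, E t = 0 := by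
  rcases lt_or_ge b a with hba | hab
  · exact fun t ht => absurd (ht.1.trans ht.2) (not_le.2 hba)
  have hsub : ∀ {y z}, y ∈ Icc a b → z ∈ Icc a b → uIcc y z ⊆ uIcc a b := fun hy hz =>
    uIcc_subset_uIcc (mem_uIcc_of_le hy.1 hy.2) (mem_uIcc_of_le hz.1 hz.2)
  have haI : a ∈ Icc a b := ⟨le_rfl, hab⟩
  set P := fun t => ∫ s in a..t, g s * E s
  have hgE : IntervalIntegrable (fun s => g s * E s) volume a b :=
    hg.mul_continuousOn (by rwa [uIcc_of_le hab])
  -- `P` is nondecreasing on `[a, b]` and dominates `E`, so it vanishes only where `E` vanishes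
  have hPE : ∀ x ∈ Icc a b, P x = 0 → ∀ t ∈ Icc a x, E t = 0 := fun x hx hPx t ht => by
    have htI : t ∈ Icc a b := ⟨ht.1, ht.2.trans hx.2⟩
    refine le_antisymm ((h t htI).trans (hPx ▸ ?_)) (hE₀ t htI)
    refine intervalIntegral.integral_mono_interval le_rfl ht.1 ht.2
      ((ae_restrict_mem measurableSet_Ioc).mono fun s hs => ?_) (hgE.mono_set (hsub haI hx))
    have hsI : s ∈ Icc a b := ⟨hs.1.le, hs.2.trans hx.2⟩
    exact mul_nonneg (hg₀ s hsI) (hE₀ s hsI)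
  suffices Icc a b ⊆ {t | P t = 0} from fun t ht => hPE t ht (this ht) t ⟨ht.1, le_rfl⟩
  refine IsClosed.Icc_subset_of_forall_mem_nhdsWithin ?_ (by simp [P]) fun x ⟨hPx, hx⟩ => ?_
  · rw [inter_comm]
    refine ContinuousOn.preimage_isClosed_of_isClosed ?_ isClosed_Icc isClosed_singleton
    simpa [uIcc_of_le hab] using
      intervalIntegral.continuousOn_primitive_interval' hgE (left_mem_uIcc (a := a) (b := b))
  have hxI : x ∈ Icc a b := Ico_subset_Icc_self hx
  have hP : ∀ t ∈ Icc a b, P t = ∫ s in x..t, g s * E s := fun t ht => by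
    rw [← zero_add (∫ s in x..t, g s * E s), ← show P x = 0 from hPx]
    exact (intervalIntegral.integral_add_adjacent_intervals (hgE.mono_set (hsub haI hxI))
      (hgE.mono_set (hsub hxI ht))).symm
  obtain ⟨z, ⟨hxz, hzb⟩, hz₁⟩ := (hg.mono_set (hsub hxI ⟨hab, le_rfl⟩)).exists_integral_lt hx.2
    one_pos
  have hsubI : Icc x z ⊆ Icc a b := Icc_subset_Icc hx.1 hzb
  have hEz := eqOn_zero_of_le_integral_mul_of_integral_lt_one hxz.le (hE.mono hsubI)
    (fun t ht => hE₀ t (hsubI ht)) (fun t ht => hg₀ t (hsubI ht))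
    (hg.mono_set (hsub hxI (hsubI ⟨hxz.le, le_rfl⟩))) hz₁
    fun t ht => hP t (hsubI ht) ▸ h t (hsubI ht)
  filter_upwards [Ico_mem_nhdsGT hxz] with t ht
  rw [hP t (hsubI (Ico_subset_Icc_self ht))]
  refine (intervalIntegral.integral_congr fun s hs => ?_).trans intervalIntegral.integral_zero
  rw [uIcc_of_le ht.1] at hs
  simp [hEz s ⟨hs.1, hs.2.trans ht.2.le⟩]

end Gronwall

theorem continuous_L2sq_sub {u₁ u₂ : ℝ → ℝ → ℝ} (hc₁ : Continuous (Function.uncurry u₁))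
    (hc₂ : Continuous (Function.uncurry u₂)) : Continuous fun s => L2sq (u₁ s - u₂ s) :=
  intervalIntegral.continuous_parametric_intervalIntegral_of_continuous'
    (f := fun s x => (u₁ s x - u₂ s x) ^ 2) ((hc₁.sub hc₂).pow 2 |>.congr fun _ => rfl) _ _

theorem IsBurgersSol.L2sq_sub_le {T : ℝ} {f u₁ u₂ : ℝ → ℝ → ℝ} (h₁ : IsBurgersSol T f u₁)
    (h₂ : IsBurgersSol T f u₂) {t : ℝ} (ht₀ : 0 ≤ t) (htT : t ≤ T) :
    L2sq (u₁ t - u₂ t) - L2sq (u₁ 0 - u₂ 0)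
      ≤ ∫ s in (0:ℝ)..t, (2 + H2sq (u₁ s) + H2sq (u₂ s)) * L2sq (u₁ s - u₂ s) := by
  obtain ⟨hc₁, hp₁, hreg₁, hde₁, hH₁⟩ := h₁
  obtain ⟨hc₂, hp₂, hreg₂, hde₂, hH₂⟩ := h₂
  have hflux : Integrable (fun p : ℝ × ℝ => 2 * (u₁ p.1 p.2 - u₂ p.1 p.2)
      * (burgersRHS (u₁ p.1) p.2 - burgersRHS (u₂ p.1) p.2)) (cylinderMeasure t) := by
    obtain ⟨B, hB⟩ := (continuous_const.mul (hc₁.sub hc₂)).exists_ae_norm_le_cylinderMeasure t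
    exact ((integrable_burgersRHS hc₁ hreg₁ hH₁ htT).sub
      (integrable_burgersRHS hc₂ hreg₂ hH₂ htT)).bdd_mul
      (continuous_const.mul (hc₁.sub hc₂)).aestronglyMeasurable hB
  have hslice : ∀ s,
      Integrable (fun x => (u₁ s x - u₂ s x) ^ 2) (volume.restrict (Ioc 0 (2 * π))) :=
    fun s => Continuous.integrableOn_Ioc (by fun_prop)
  have hH : IntervalIntegrable (fun s => 2 + H2sq (u₁ s) + H2sq (u₂ s)) volume 0 t :=
    ((intervalIntegrable_const.add hH₁).add hH₂).mono_set
      (uIcc_subset_uIcc_left (mem_uIcc_of_le ht₀ htT))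
  calc L2sq (u₁ t - u₂ t) - L2sq (u₁ 0 - u₂ 0)
      = ∫ s in (0:ℝ)..t, ∫ x, 2 * (u₁ s x - u₂ s x) * (burgersRHS (u₁ s) x - burgersRHS (u₂ s) x)
          ∂volume.restrict (Ioc 0 (2 * π)) := by
        simp only [L2sq, Pi.sub_apply, intervalIntegral.integral_of_le two_pi_pos.le]
        refine integral_sub_eq_integral_integral_of_hasDerivAt
          (W := fun s x => (u₁ s x - u₂ s x) ^ 2) ht₀ (fun x => ?_)
          (fun s hs x => ?_) hflux (hslice 0) (hslice t)
        · exact (by fun_prop : Continuous fun s => (u₁ s x - u₂ s x) ^ 2).continuousOn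
        · have hs' : s ∈ Ioo 0 T := ⟨hs.1, hs.2.trans_le htT⟩
          -- the forcing `f` cancels in the time derivative of `(u₁ - u₂)²`
          exact ((hde₁ s hs' x).fun_sub (hde₂ s hs' x)).fun_pow 2 |>.congr_deriv (by
            simp only [burgersRHS]; ring)
    _ ≤ ∫ s in (0:ℝ)..t, (2 + H2sq (u₁ s) + H2sq (u₂ s)) * L2sq (u₁ s - u₂ s) := by
        refine intervalIntegral.integral_mono_on_of_le_Ioo ht₀
          ((intervalIntegrable_iff_integrableOn_Ioc_of_le ht₀).2 hflux.integral_prod_left)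
          (hH.mul_continuousOn (continuous_L2sq_sub hc₁ hc₂).continuousOn) fun s hs => ?_
        rw [← intervalIntegral.integral_of_le two_pi_pos.le]
        exact integral_energy_flux_le (hreg₁ s ⟨hs.1, hs.2.le.trans htT⟩)
          (hreg₂ s ⟨hs.1, hs.2.le.trans htT⟩) (hp₁ s) (hp₂ s)

theorem stmt17_general (T : ℝ)
    (f : ℝ → ℝ → ℝ)
    (u₁ u₂ : ℝ → ℝ → ℝ)
    (h₁ : IsBurgersSol T f u₁) (h₂ : IsBurgersSol T f u₂)
    (hinit : ∀ x, u₁ 0 x = u₂ 0 x) :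
    ∀ t ∈ Set.Icc (0:ℝ) T, ∀ x, u₁ t x = u₂ t x := by
  have henergy : ∀ t ∈ Icc 0 T, L2sq (u₁ t - u₂ t)
      ≤ ∫ s in (0:ℝ)..t, (2 + H2sq (u₁ s) + H2sq (u₂ s)) * L2sq (u₁ s - u₂ s) := fun t ht => by
    have hE₀ : L2sq (u₁ 0 - u₂ 0) = 0 := by simp [L2sq, hinit]
    simpa [hE₀] using h₁.L2sq_sub_le h₂ ht.1 ht.2
  obtain ⟨hc₁, hp₁, -, -, hH₁⟩ := h₁
  obtain ⟨hc₂, hp₂, -, -, hH₂⟩ := h₂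
  have hE := eqOn_zero_of_le_integral_mul (continuous_L2sq_sub hc₁ hc₂).continuousOn
    (fun _ _ => L2sq_nonneg _) (fun s _ => by linarith [H2sq_nonneg (u₁ s), H2sq_nonneg (u₂ s)])
    ((intervalIntegrable_const.add hH₁).add hH₂) henergy
  intro t ht x
  refine sub_eq_zero.1 <| Function.Periodic.eq_zero_of_integral_sq_eq_zero (v := u₁ t - u₂ t)
    (fun y => ?_) two_pi_pos ?_ (hE t ht) x
  · simp [hp₁ t y, hp₂ t y]
  · exact (hc₁.comp (Continuous.prodMk_right t)).sub (hc₂.comp (Continuous.prodMk_right t))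

/-- Uniqueness of weak solutions of the one-dimensional periodic Burgers equation
`∂_t u = ∂_x² u + u ∂_x u + f` in the class `L²([0,T], H²) ∩ H¹([0,T], L²)` with
given initial data. -/
theorem stmt17 (T Cf : ℝ) (hT : 0 < T)
    (f : ℝ → ℝ → ℝ)
    (hf_bdd : ∀ t ∈ Set.Icc (0:ℝ) T, ∀ x, |f t x| ≤ Cf)
    (u₁ u₂ : ℝ → ℝ → ℝ)
    (h₁ : IsBurgersSol T f u₁) (h₂ : IsBurgersSol T f u₂)
    (hinit : ∀ x, u₁ 0 x = u₂ 0 x) :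
    ∀ t ∈ Set.Icc (0:ℝ) T, ∀ x, u₁ t x = u₂ t x :=
  stmt17_general T f u₁ u₂ h₁ h₂ hinit
end
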